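/- Let $\mu,\nu$ be Borel probability measures on a complete separable metric space $(X,d)$, $x_0\in X$, and suppose the moments $\Theta_{2p}(\mu)=\int d(x_0,x)^{2p}d\mu$ and $\Theta_{2p}(\nu)$ are finite, $0<p\leq 1/2$. Let $\mathscr{B}\subset X$ be open with $\mu(\mathscr{B}),\nu(\mathscr{B})\leq 1/4$, and let $\psi:X\to\mathbb{R}$ be measurable and $p$-H\"older with constant $L\geq 1$ on $X\setminus\mathscr{B}$. Then $\left|\int\psi\,d\mu-\int\psi\,d\nu\right| \leq L\left[W_p(\mu,\nu)+4\sqrt{\mu(\mathscr{B})}(\|\psi\|_{L^2(\mu)}+\Theta_{2p}(\mu)^{1/2})+4\sqrt{\nu(\mathscr{B})}(\|\psi\|_{L^2(\nu)}+\Theta_{2p}(\nu)^{1/2})\right]$. -/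

import Mathlib

/-!
Write `ρ̄ = ρ[|𝓑ᶜ]` for the normalized restriction of `ρ ∈ {μ, ν}` to `𝓑ᶜ`, and let `φ_ρ` be `ψ`
with its values on `𝓑` replaced by the constant `∫ ψ dρ̄`.

Off `𝓑` the functions `ψ` and `φ_ρ` agree, so `∫ ψ dρ - ∫ φ_ρ dρ = ∫_𝓑 (ψ - ∫ ψ dρ̄) dρ`, which
Cauchy–Schwarz bounds by `2 √ρ(𝓑) ‖ψ‖_{L²(ρ)}`, because `ρ(𝓑) / (1 - ρ(𝓑)) ≤ √ρ(𝓑)` when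
`ρ(𝓑) ≤ 1/4`.

Since `ρ̄` lives on `𝓑ᶜ`, where `ψ` is `p`-Hölder, averaging the Hölder bound against `μ̄` and `ν̄`
gives `|φ_μ x - φ_ν y| ≤ L (d(x, y)^p + A_μ x + A_ν y)` for all `x, y`, where `A_ρ` vanishes off `𝓑`
and on `𝓑` is `d(x₀, x)^p + ∫ d(x₀, ·)^p dρ̄`. Integrating against a coupling `π` of `μ` and `ν`,
and bounding `∫ A_ρ dρ ≤ 2 √ρ(𝓑) Θ_{2p}(ρ)^{1/2}` by Cauchy–Schwarz as before, gives
`|∫ φ_μ dμ - ∫ φ_ν dν| ≤ L (∫ d^p dπ + 2 √μ(𝓑) Θ_{2p}(μ)^{1/2} + 2 √ν(𝓑) Θ_{2p}(ν)^{1/2})`.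
The triangle inequality, `L ≥ 1` and the infimum over `π` finish the proof.
-/

open MeasureTheory ENNReal

noncomputable section

/-- The set of couplings between `μ` and `ν`. -/
def couplings {X : Type*} [MeasurableSpace X] (μ ν : Measure X) : Set (Measure (X × X)) :=
  {π | π.map Prod.fst = μ ∧ π.map Prod.snd = ν}

/-- The order-`p` Wasserstein distance (`0 < p ≤ 1`):
`W_p(μ,ν) = inf_{π ∈ Π(μ,ν)} ∬ d(x,y)^p dπ(x,y)`. -/
def Wp {X : Type*} [MeasurableSpace X] [MetricSpace X] (p : ℝ) (μ ν : Measure X) : ℝ≥0∞ :=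
  ⨅ π ∈ couplings μ ν, ∫⁻ q : X × X, (ENNReal.ofReal (dist q.1 q.2)) ^ p ∂π

open ProbabilityTheory
open scoped NNReal

theorem mul_inv_one_sub_le_rpow_half {m : ℝ≥0∞} (hm : m ≤ 1 / 4) :
    m * (1 - m)⁻¹ ≤ m ^ (1 / 2 : ℝ) := by
  have hm_top : m ≠ ⊤ := ne_top_of_le_ne_top (by norm_num) hm
  lift m to NNReal using hm_top
  have hm' : (m : ℝ) ≤ 1 / 4 := by
    simpa using (ENNReal.toReal_le_toReal (by simp) (by norm_num)).2 hm
  have h1m : (1 : ℝ≥0∞) - m = ENNReal.ofReal (1 - m) := by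
    rw [ENNReal.ofReal_sub _ m.coe_nonneg, ENNReal.ofReal_one, ENNReal.ofReal_coe_nnreal]
  rw [h1m, ← ENNReal.ofReal_inv_of_pos (by linarith), ← ENNReal.ofReal_coe_nnreal,
    ← ENNReal.ofReal_mul m.coe_nonneg, ENNReal.ofReal_rpow_of_nonneg m.coe_nonneg (by norm_num)]
  refine ENNReal.ofReal_le_ofReal ?_
  rw [← Real.sqrt_eq_rpow, ← div_eq_mul_inv, div_le_iff₀ (by linarith)]
  have hs := Real.sq_sqrt m.coe_nonneg
  have hs' : Real.sqrt m ≤ 1 / 2 := by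
    rw [Real.sqrt_le_left (by norm_num)]; linarith
  nlinarith [mul_nonneg (Real.sqrt_nonneg m) (show 0 ≤ 1 - Real.sqrt m - m by linarith)]

theorem edist_rpow_triangle {X : Type*} [PseudoEMetricSpace X] {r : ℝ} (hr0 : 0 ≤ r) (hr1 : r ≤ 1)
    (x y z : X) : edist x z ^ r ≤ edist x y ^ r + edist y z ^ r :=
  (ENNReal.rpow_le_rpow (edist_triangle x y z) hr0).trans
    (ENNReal.rpow_add_le_add_rpow _ _ hr0 hr1)

section CauchySchwarz

variable {X : Type*} [MeasurableSpace X] {ρ : Measure X} {g : X → ℝ≥0∞}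

theorem setLIntegral_le_eLpNorm_two_mul (hg : AEMeasurable g ρ) (s : Set X) :
    ∫⁻ x in s, g x ∂ρ ≤ eLpNorm g 2 ρ * ρ s ^ (1 / 2 : ℝ) := by
  have h := eLpNorm_le_eLpNorm_mul_rpow_measure_univ (μ := ρ.restrict s) (p := 1) (q := 2)
    one_le_two hg.restrict.aestronglyMeasurable
  rw [eLpNorm_one_eq_lintegral_enorm, Measure.restrict_apply_univ] at h
  simp only [enorm_eq_self] at h
  refine h.trans ?_
  norm_num
  exact mul_le_mul_left (eLpNorm_mono_measure g Measure.restrict_le_self) _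

theorem lintegral_le_eLpNorm_two [IsProbabilityMeasure ρ] (hg : AEMeasurable g ρ) :
    ∫⁻ x, g x ∂ρ ≤ eLpNorm g 2 ρ := by
  simpa using setLIntegral_le_eLpNorm_two_mul hg Set.univ

theorem setLIntegral_add_lintegral_cond_mul_le [IsProbabilityMeasure ρ] (hg : AEMeasurable g ρ)
    {s : Set X} (hs : MeasurableSet s) (hρs : ρ s ≤ 1 / 4) :
    ∫⁻ x in s, g x ∂ρ + (∫⁻ x, g x ∂ρ[|sᶜ]) * ρ s ≤ 2 * ρ s ^ (1 / 2 : ℝ) * eLpNorm g 2 ρ := by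
  have hcond : (∫⁻ x, g x ∂ρ[|sᶜ]) * ρ s ≤ ρ s ^ (1 / 2 : ℝ) * eLpNorm g 2 ρ :=
    calc (∫⁻ x, g x ∂ρ[|sᶜ]) * ρ s
        = ρ s * (1 - ρ s)⁻¹ * ∫⁻ x in sᶜ, g x ∂ρ := by
          rw [ProbabilityTheory.cond, lintegral_smul_measure, prob_compl_eq_one_sub hs,
            smul_eq_mul]
          ring
      _ ≤ ρ s ^ (1 / 2 : ℝ) * eLpNorm g 2 ρ := by
          gcongr
          · exact mul_inv_one_sub_le_rpow_half hρs
          · exact (setLIntegral_le_lintegral _ _).trans (lintegral_le_eLpNorm_two hg)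
  calc ∫⁻ x in s, g x ∂ρ + (∫⁻ x, g x ∂ρ[|sᶜ]) * ρ s
      ≤ eLpNorm g 2 ρ * ρ s ^ (1 / 2 : ℝ) + ρ s ^ (1 / 2 : ℝ) * eLpNorm g 2 ρ :=
        add_le_add (setLIntegral_le_eLpNorm_two_mul hg s) hcond
    _ = 2 * ρ s ^ (1 / 2 : ℝ) * eLpNorm g 2 ρ := by ring

end CauchySchwarz

theorem eLpNorm_edist_rpow_two {X : Type*} [MeasurableSpace X] [PseudoEMetricSpace X]
    (ρ : Measure X) (x₀ : X) (r : ℝ) :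
    eLpNorm (fun x => edist x₀ x ^ r) 2 ρ = (∫⁻ x, edist x₀ x ^ (2 * r) ∂ρ) ^ (1 / 2 : ℝ) := by
  rw [eLpNorm_eq_lintegral_rpow_enorm_toReal two_ne_zero ofNat_ne_top]
  simp only [enorm_eq_self, ENNReal.toReal_ofNat, one_div]
  congr 1
  refine lintegral_congr fun x => ?_
  rw [mul_comm, ENNReal.rpow_mul]

theorem enorm_sub_integral_le_lintegral {X E : Type*} [MeasurableSpace X] [NormedAddCommGroup E]
    [NormedSpace ℝ E] [CompleteSpace E] {ν : Measure X} [IsProbabilityMeasure ν] {f : X → E}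
    (hf : Integrable f ν) (a : E) : ‖a - ∫ x, f x ∂ν‖ₑ ≤ ∫⁻ x, ‖a - f x‖ₑ ∂ν := by
  have : a - ∫ x, f x ∂ν = ∫ x, (a - f x) ∂ν := by
    rw [integral_sub (integrable_const a) hf, integral_const, probReal_univ, one_smul]
  rw [this]
  exact enorm_integral_le_lintegral_enorm _

theorem MeasureTheory.IntegrableOn.integrable_cond {X E : Type*} [MeasurableSpace X]
    [NormedAddCommGroup E] {ρ : Measure X} {s : Set X} {f : X → E} (hf : IntegrableOn f s ρ) (hs : ρ s ≠ 0) :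
    Integrable f ρ[|s] :=
  hf.smul_measure (ENNReal.inv_ne_top.2 hs)

section Coupling

variable {X : Type*} [MeasurableSpace X] {μ ν : Measure X} {π : Measure (X × X)}

theorem enorm_integral_sub_integral_le_of_mem_couplings {E : Type*} [NormedAddCommGroup E]
    [NormedSpace ℝ E] [CompleteSpace E] (hπ : π ∈ couplings μ ν) {f g : X → E}
    (hf : Integrable f μ) (hg : Integrable g ν) :
    ‖∫ x, f x ∂μ - ∫ y, g y ∂ν‖ₑ ≤ ∫⁻ q, ‖f q.1 - g q.2‖ₑ ∂π := by
  obtain ⟨rfl, rfl⟩ := hπ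
  have hf' : Integrable (fun q => f q.1) π :=
    (integrable_map_measure hf.aestronglyMeasurable measurable_fst.aemeasurable).1 hf
  have hg' : Integrable (fun q => g q.2) π :=
    (integrable_map_measure hg.aestronglyMeasurable measurable_snd.aemeasurable).1 hg
  rw [integral_map measurable_fst.aemeasurable hf.aestronglyMeasurable,
    integral_map measurable_snd.aemeasurable hg.aestronglyMeasurable, ← integral_sub hf' hg']
  exact enorm_integral_le_lintegral_enorm _

theorem lintegral_add_add_of_mem_couplings (hπ : π ∈ couplings μ ν) {f g : X → ℝ≥0∞}
    (hf : Measurable f) (hg : Measurable g) (c : X × X → ℝ≥0∞) :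
    ∫⁻ q, (f q.1 + c q + g q.2) ∂π = ∫⁻ x, f x ∂μ + ∫⁻ q, c q ∂π + ∫⁻ y, g y ∂ν := by
  obtain ⟨rfl, rfl⟩ := hπ
  rw [lintegral_map hf measurable_fst, lintegral_map hg measurable_snd,
    lintegral_add_right _ (show Measurable fun q : X × X => g q.2 from hg.comp measurable_snd),
    lintegral_add_left (show Measurable fun q : X × X => f q.1 from hf.comp measurable_fst)]

theorem le_mul_Wp_add [MetricSpace X] {p : ℝ} {a B C : ℝ≥0∞} (hC₀ : C ≠ 0) (hC : C ≠ ⊤)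
    (h : ∀ π ∈ couplings μ ν, a ≤ C * (∫⁻ q, edist q.1 q.2 ^ p ∂π + B)) :
    a ≤ C * (Wp p μ ν + B) := by
  simp only [Wp, ENNReal.iInf_add, ENNReal.mul_iInf_of_ne hC₀ hC, ← edist_dist]
  exact le_iInf₂ h

end Coupling

theorem lintegral_edist_rpow_ne_top_of_two_mul {X : Type*} [MeasurableSpace X]
    [PseudoEMetricSpace X] [OpensMeasurableSpace X] {ρ : Measure X} [IsProbabilityMeasure ρ]
    {x₀ : X} {r : ℝ} (h : ∫⁻ x, edist x₀ x ^ (2 * r) ∂ρ ≠ ⊤) : ∫⁻ x, edist x₀ x ^ r ∂ρ ≠ ⊤ := by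
  refine ne_top_of_le_ne_top ?_
    (lintegral_le_eLpNorm_two (measurable_edist_right.pow_const r).aemeasurable)
  rw [eLpNorm_edist_rpow_two]
  exact ENNReal.rpow_ne_top_of_nonneg (by norm_num) h

theorem HolderOnWith.of_abs_sub_le {X : Type*} [PseudoMetricSpace X] {C r : ℝ≥0} {f : X → ℝ}
    {t : Set X} (h : ∀ x ∈ t, ∀ y ∈ t, |f x - f y| ≤ C * dist x y ^ (r : ℝ)) :
    HolderOnWith C r f t := by
  intro x hx y hy
  rw [edist_dist, edist_dist, Real.dist_eq,
    ENNReal.ofReal_rpow_of_nonneg dist_nonneg r.coe_nonneg, ← ENNReal.ofReal_coe_nnreal,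
    ← ENNReal.ofReal_mul C.coe_nonneg]
  exact ENNReal.ofReal_le_ofReal (h x hx y hy)

theorem HolderOnWith.integrableOn {X : Type*} [PseudoMetricSpace X] [MeasurableSpace X]
    [OpensMeasurableSpace X] {ρ : Measure X} [IsFiniteMeasure ρ] {C r : ℝ≥0} {t : Set X}
    {ψ : X → ℝ} (hψ : HolderOnWith C r ψ t) (hψm : AEStronglyMeasurable ψ ρ) (hr : r ≤ 1)
    {z : X} (hz : z ∈ t) {x₀ : X} (hmom : ∫⁻ x, edist x₀ x ^ (r : ℝ) ∂ρ ≠ ⊤) :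
    IntegrableOn ψ t ρ := by
  refine ⟨hψm.restrict, ?_⟩
  have hbound : ∀ x ∈ t,
      ‖ψ x‖ₑ ≤ ‖ψ z‖ₑ + C * (edist z x₀ ^ (r : ℝ) + edist x₀ x ^ (r : ℝ)) := fun x hx =>
    calc ‖ψ x‖ₑ = ‖ψ z + (ψ x - ψ z)‖ₑ := by rw [add_sub_cancel]
      _ ≤ ‖ψ z‖ₑ + C * edist z x ^ (r : ℝ) := by
          grw [enorm_add_le, ← edist_eq_enorm_sub, edist_comm z x, hψ x hx z hz]
      _ ≤ ‖ψ z‖ₑ + C * (edist z x₀ ^ (r : ℝ) + edist x₀ x ^ (r : ℝ)) := by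
          grw [edist_rpow_triangle r.coe_nonneg hr z x₀ x]
  calc ∫⁻ x in t, ‖ψ x‖ₑ ∂ρ
      ≤ ∫⁻ x in t, ‖ψ z‖ₑ + C * (edist z x₀ ^ (r : ℝ) + edist x₀ x ^ (r : ℝ)) ∂ρ :=
        setLIntegral_mono (by fun_prop) hbound
    _ ≤ ∫⁻ x, ‖ψ z‖ₑ + C * (edist z x₀ ^ (r : ℝ) + edist x₀ x ^ (r : ℝ)) ∂ρ :=
        setLIntegral_le_lintegral _ _
    _ < ⊤ := by
        rw [lintegral_add_left measurable_const, lintegral_const_mul _ (by fun_prop),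
          lintegral_add_left measurable_const, lintegral_const, lintegral_const]
        exact ENNReal.add_lt_top.2 ⟨by finiteness, ENNReal.mul_lt_top (by simp)
          (ENNReal.add_lt_top.2 ⟨by finiteness, hmom.lt_top⟩)⟩

section CondMean

variable {X : Type*} [MeasurableSpace X] {s : Set X} {ρ : Measure X} {ψ : X → ℝ}

open Classical in
def replaceByCondMean (s : Set X) (ρ : Measure X) (ψ : X → ℝ) : X → ℝ :=
  s.piecewise (fun _ => ∫ u, ψ u ∂ρ[|sᶜ]) ψ

/-- On `s`, an upper bound for `∫ d(x, u)^r dρ[|sᶜ](u)`, the cost of moving the point mass at `x`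
onto `ρ[|sᶜ]`. -/
def transportPenalty [PseudoEMetricSpace X] (s : Set X) (ρ : Measure X) (x₀ : X) (r : ℝ) :
    X → ℝ≥0∞ :=
  s.indicator fun x => edist x₀ x ^ r + ∫⁻ u, edist x₀ u ^ r ∂ρ[|sᶜ]

theorem measurable_transportPenalty [PseudoEMetricSpace X] [OpensMeasurableSpace X]
    (hs : MeasurableSet s) (x₀ : X) (r : ℝ) : Measurable (transportPenalty s ρ x₀ r) :=
  ((measurable_edist_right.pow_const r).add_const _).indicator hs

theorem lintegral_transportPenalty_le [PseudoEMetricSpace X] [OpensMeasurableSpace X]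
    [IsProbabilityMeasure ρ] (hs : MeasurableSet s) (hρs : ρ s ≤ 1 / 4) (x₀ : X) (r : ℝ) :
    ∫⁻ x, transportPenalty s ρ x₀ r x ∂ρ
      ≤ 2 * ρ s ^ (1 / 2 : ℝ) * eLpNorm (fun x => edist x₀ x ^ r) 2 ρ := by
  rw [transportPenalty, lintegral_indicator hs, lintegral_add_right _ measurable_const,
    setLIntegral_const]
  exact setLIntegral_add_lintegral_cond_mul_le (measurable_edist_right.pow_const r).aemeasurable
    hs hρs

theorem integrable_replaceByCondMean [IsFiniteMeasure ρ] (hs : MeasurableSet s)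
    (hψ : IntegrableOn ψ sᶜ ρ) : Integrable (replaceByCondMean s ρ ψ) ρ := by
  classical
  exact Integrable.piecewise hs (integrableOn_const (by finiteness)) hψ

theorem enorm_integral_sub_integral_replaceByCondMean_le [IsProbabilityMeasure ρ]
    (hs : MeasurableSet s) (hρs : ρ s ≤ 1 / 4) (hψm : AEStronglyMeasurable ψ ρ)
    (hψ : IntegrableOn ψ sᶜ ρ) :
    ‖∫ x, ψ x ∂ρ - ∫ x, replaceByCondMean s ρ ψ x ∂ρ‖ₑ
      ≤ 2 * ρ s ^ (1 / 2 : ℝ) * eLpNorm ψ 2 ρ := by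
  classical
  refine le_trans ?_ (eLpNorm_enorm ψ ▸ setLIntegral_add_lintegral_cond_mul_le hψm.enorm hs hρs)
  set c := ∫ u, ψ u ∂ρ[|sᶜ]
  by_cases hψs : IntegrableOn ψ s ρ
  swap
  · have : ∫⁻ x in s, ‖ψ x‖ₑ ∂ρ = ⊤ := not_lt_top_iff.1 fun h => hψs ⟨hψm.restrict, h⟩
    simp [this]
  have hψ' : Integrable ψ ρ := by simpa using hψs.union hψ
  have hdiff : ∫ x, ψ x ∂ρ - ∫ x, replaceByCondMean s ρ ψ x ∂ρ = ∫ x in s, (ψ x - c) ∂ρ := by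
    rw [replaceByCondMean, integral_piecewise hs (integrableOn_const (by finiteness)) hψ,
      ← integral_add_compl hs hψ', integral_sub hψs (integrableOn_const (by finiteness))]
    ring
  calc ‖∫ x, ψ x ∂ρ - ∫ x, replaceByCondMean s ρ ψ x ∂ρ‖ₑ
      ≤ ∫⁻ x in s, ‖ψ x - c‖ₑ ∂ρ := hdiff ▸ enorm_integral_le_lintegral_enorm _
    _ ≤ ∫⁻ x in s, ‖ψ x‖ₑ + ‖c‖ₑ ∂ρ := lintegral_mono fun x => enorm_sub_le
    _ = ∫⁻ x in s, ‖ψ x‖ₑ ∂ρ + ‖c‖ₑ * ρ s := by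
        rw [lintegral_add_right _ measurable_const, setLIntegral_const]
    _ ≤ ∫⁻ x in s, ‖ψ x‖ₑ ∂ρ + (∫⁻ x, ‖ψ x‖ₑ ∂ρ[|sᶜ]) * ρ s := by
        grw [enorm_integral_le_lintegral_enorm]

theorem enorm_sub_replaceByCondMean_le [PseudoEMetricSpace X] [OpensMeasurableSpace X]
    [IsFiniteMeasure ρ] (hs : MeasurableSet s) (hρ : ρ sᶜ ≠ 0) (hψ : IntegrableOn ψ sᶜ ρ)
    {r : ℝ} (hr0 : 0 ≤ r) (hr1 : r ≤ 1) (x₀ : X) {a : ℝ} {C D : ℝ≥0∞} {z : X}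
    (h : ∀ u ∉ s, ‖a - ψ u‖ₑ ≤ C * (D + edist z u ^ r)) (y : X) :
    ‖a - replaceByCondMean s ρ ψ y‖ₑ ≤ C * (D + edist z y ^ r + transportPenalty s ρ x₀ r y) := by
  classical
  by_cases hy : y ∈ s
  swap
  · simpa [replaceByCondMean, transportPenalty, hy] using h y hy
  have := cond_isProbabilityMeasure hρ
  simp only [replaceByCondMean, transportPenalty, Set.piecewise_eq_of_mem _ _ _ hy,
    Set.indicator_of_mem hy]
  calc ‖a - ∫ u, ψ u ∂ρ[|sᶜ]‖ₑ
      ≤ ∫⁻ u, ‖a - ψ u‖ₑ ∂ρ[|sᶜ] := enorm_sub_integral_le_lintegral (hψ.integrable_cond hρ) a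
    _ ≤ ∫⁻ u, C * ((D + edist z y ^ r + edist x₀ y ^ r) + edist x₀ u ^ r) ∂ρ[|sᶜ] := by
        refine lintegral_mono_ae ?_
        filter_upwards [ae_cond_mem hs.compl] with u hu
        grw [h u hu, edist_rpow_triangle hr0 hr1 z y u, edist_rpow_triangle hr0 hr1 y x₀ u,
          edist_comm y x₀]
        exact le_of_eq (by ring)
    _ = C * (D + edist z y ^ r + (edist x₀ y ^ r + ∫⁻ u, edist x₀ u ^ r ∂ρ[|sᶜ])) := by
        rw [lintegral_const_mul _ (by fun_prop), lintegral_add_left measurable_const,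
          lintegral_const, measure_univ, mul_one, add_assoc (D + _)]

theorem enorm_replaceByCondMean_sub_le [PseudoEMetricSpace X] [OpensMeasurableSpace X]
    {μ ν : Measure X} [IsFiniteMeasure μ] [IsFiniteMeasure ν] (hs : MeasurableSet s)
    (hμ : μ sᶜ ≠ 0) (hν : ν sᶜ ≠ 0) (hψμ : IntegrableOn ψ sᶜ μ) (hψν : IntegrableOn ψ sᶜ ν)
    {C r : ℝ≥0} (hψ : HolderOnWith C r ψ sᶜ) (hr : r ≤ 1) (x₀ x y : X) :
    ‖replaceByCondMean s μ ψ x - replaceByCondMean s ν ψ y‖ₑ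
      ≤ C * (transportPenalty s μ x₀ r x + edist x y ^ (r : ℝ) + transportPenalty s ν x₀ r y) := by
  have hx : ∀ u ∉ s, ‖replaceByCondMean s μ ψ x - ψ u‖ₑ
      ≤ C * (transportPenalty s μ x₀ r x + edist x u ^ (r : ℝ)) := by
    intro u hu
    have := enorm_sub_replaceByCondMean_le hs hμ hψμ r.coe_nonneg hr x₀ (a := ψ u) (D := 0)
      (fun w hw => by simpa [← edist_eq_enorm_sub] using hψ u hu w hw) x
    rw [enorm_sub_rev, edist_comm, add_comm]
    simpa using this
  exact enorm_sub_replaceByCondMean_le hs hν hψν r.coe_nonneg hr x₀ hx y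

theorem enorm_integral_replaceByCondMean_sub_le [PseudoEMetricSpace X] [OpensMeasurableSpace X]
    {μ ν : Measure X} [IsFiniteMeasure μ] [IsFiniteMeasure ν] {π : Measure (X × X)}
    (hπ : π ∈ couplings μ ν) (hs : MeasurableSet s) (hμ : μ sᶜ ≠ 0) (hν : ν sᶜ ≠ 0)
    (hψμ : IntegrableOn ψ sᶜ μ) (hψν : IntegrableOn ψ sᶜ ν) {C r : ℝ≥0}
    (hψ : HolderOnWith C r ψ sᶜ) (hr : r ≤ 1) (x₀ : X) :
    ‖∫ x, replaceByCondMean s μ ψ x ∂μ - ∫ y, replaceByCondMean s ν ψ y ∂ν‖ₑ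
      ≤ C * (∫⁻ x, transportPenalty s μ x₀ r x ∂μ + ∫⁻ q, edist q.1 q.2 ^ (r : ℝ) ∂π
        + ∫⁻ y, transportPenalty s ν x₀ r y ∂ν) :=
  calc ‖∫ x, replaceByCondMean s μ ψ x ∂μ - ∫ y, replaceByCondMean s ν ψ y ∂ν‖ₑ
      ≤ ∫⁻ q, ‖replaceByCondMean s μ ψ q.1 - replaceByCondMean s ν ψ q.2‖ₑ ∂π :=
        enorm_integral_sub_integral_le_of_mem_couplings hπ
          (integrable_replaceByCondMean hs hψμ) (integrable_replaceByCondMean hs hψν)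
    _ ≤ ∫⁻ q, C * (transportPenalty s μ x₀ r q.1 + edist q.1 q.2 ^ (r : ℝ)
          + transportPenalty s ν x₀ r q.2) ∂π :=
        lintegral_mono fun q => enorm_replaceByCondMean_sub_le hs hμ hν hψμ hψν hψ hr x₀ q.1 q.2
    _ = _ := by
        rw [lintegral_const_mul' _ _ ENNReal.coe_ne_top, lintegral_add_add_of_mem_couplings hπ
          (measurable_transportPenalty hs x₀ r) (measurable_transportPenalty hs x₀ r)]

end CondMean

theorem HolderOnWith.enorm_integral_sub_le_of_mem_couplings {X : Type*} [MeasurableSpace X]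
    [PseudoEMetricSpace X] [OpensMeasurableSpace X] {μ ν : Measure X} [IsProbabilityMeasure μ]
    [IsProbabilityMeasure ν] {π : Measure (X × X)} (hπ : π ∈ couplings μ ν) {s : Set X}
    (hs : MeasurableSet s) (hμs : μ s ≤ 1 / 4) (hνs : ν s ≤ 1 / 4) {ψ : X → ℝ}
    (hψm : Measurable ψ) (hψμ : IntegrableOn ψ sᶜ μ) (hψν : IntegrableOn ψ sᶜ ν) {C r : ℝ≥0}
    (hC : 1 ≤ C) (hψ : HolderOnWith C r ψ sᶜ) (hr : r ≤ 1) (x₀ : X) :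
    ‖∫ x, ψ x ∂μ - ∫ x, ψ x ∂ν‖ₑ
      ≤ C * (∫⁻ q, edist q.1 q.2 ^ (r : ℝ) ∂π
        + (4 * μ s ^ (1 / 2 : ℝ) * (eLpNorm ψ 2 μ + eLpNorm (fun x => edist x₀ x ^ (r : ℝ)) 2 μ)
          + 4 * ν s ^ (1 / 2 : ℝ) * (eLpNorm ψ 2 ν
            + eLpNorm (fun x => edist x₀ x ^ (r : ℝ)) 2 ν))) := by
  have hC₁ : (1 : ℝ≥0∞) ≤ C := by exact_mod_cast hC
  have hcompl {ρ : Measure X} [IsProbabilityMeasure ρ] (hρ : ρ s ≤ 1 / 4) : ρ sᶜ ≠ 0 :=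
    (prob_compl_eq_zero_iff hs).not.2 (hρ.trans_lt (by norm_num)).ne
  set φμ := replaceByCondMean s μ ψ
  set φν := replaceByCondMean s ν ψ
  set Θμ := eLpNorm (fun x => edist x₀ x ^ (r : ℝ)) 2 μ
  set Θν := eLpNorm (fun x => edist x₀ x ^ (r : ℝ)) 2 ν
  set I := ∫⁻ q, edist q.1 q.2 ^ (r : ℝ) ∂π
  have htri := edist_triangle4 (∫ x, ψ x ∂μ) (∫ x, φμ x ∂μ) (∫ x, φν x ∂ν) (∫ x, ψ x ∂ν)
  rw [edist_comm (∫ x, φν x ∂ν)] at htri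
  simp only [edist_eq_enorm_sub] at htri
  calc _ ≤ _ := htri
    _ ≤ 2 * μ s ^ (1 / 2 : ℝ) * eLpNorm ψ 2 μ
        + C * (2 * μ s ^ (1 / 2 : ℝ) * Θμ + I + 2 * ν s ^ (1 / 2 : ℝ) * Θν)
        + 2 * ν s ^ (1 / 2 : ℝ) * eLpNorm ψ 2 ν := by
      grw [enorm_integral_sub_integral_replaceByCondMean_le hs hμs hψm.aestronglyMeasurable hψμ,
        enorm_integral_sub_integral_replaceByCondMean_le hs hνs hψm.aestronglyMeasurable hψν,
        enorm_integral_replaceByCondMean_sub_le hπ hs (hcompl hμs) (hcompl hνs) hψμ hψν hψ hr x₀,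
        lintegral_transportPenalty_le hs hμs, lintegral_transportPenalty_le hs hνs]
    _ ≤ C * (2 * μ s ^ (1 / 2 : ℝ) * eLpNorm ψ 2 μ)
        + C * (2 * μ s ^ (1 / 2 : ℝ) * Θμ + I + 2 * ν s ^ (1 / 2 : ℝ) * Θν)
        + C * (2 * ν s ^ (1 / 2 : ℝ) * eLpNorm ψ 2 ν) := by
      gcongr ?_ + _ + ?_ <;> exact le_mul_of_one_le_left' hC₁
    _ = C * (I + (2 * μ s ^ (1 / 2 : ℝ) * (eLpNorm ψ 2 μ + Θμ)
        + 2 * ν s ^ (1 / 2 : ℝ) * (eLpNorm ψ 2 ν + Θν))) := by ring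
    _ ≤ _ := by gcongr <;> norm_num

theorem integral_diff_le_holder_off_small_set_general
    {X : Type*} [MetricSpace X] [MeasurableSpace X] [BorelSpace X]
    {p L : ℝ} (hp0 : 0 < p) (hp1 : p ≤ 1 / 2) (hL : 1 ≤ L) (x₀ : X)
    (μ ν : Measure X) [IsProbabilityMeasure μ] [IsProbabilityMeasure ν]
    (hμmom : ∫⁻ x, (ENNReal.ofReal (dist x₀ x)) ^ (2 * p) ∂μ ≠ ⊤)
    (hνmom : ∫⁻ x, (ENNReal.ofReal (dist x₀ x)) ^ (2 * p) ∂ν ≠ ⊤)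
    (𝓑 : Set X) (h𝓑 : IsOpen 𝓑) (hμ𝓑 : μ 𝓑 ≤ 1 / 4) (hν𝓑 : ν 𝓑 ≤ 1 / 4)
    (ψ : X → ℝ) (hψmeas : Measurable ψ)
    (hHolder : ∀ x ∉ 𝓑, ∀ y ∉ 𝓑, |ψ x - ψ y| ≤ L * dist x y ^ p) :
    ENNReal.ofReal |(∫ x, ψ x ∂μ) - ∫ x, ψ x ∂ν|
      ≤ ENNReal.ofReal L *
        (Wp p μ ν
          + 4 * (μ 𝓑) ^ (1 / 2 : ℝ)
            * (eLpNorm ψ 2 μ + (∫⁻ x, (ENNReal.ofReal (dist x₀ x)) ^ (2 * p) ∂μ) ^ (1 / 2 : ℝ))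
          + 4 * (ν 𝓑) ^ (1 / 2 : ℝ)
            * (eLpNorm ψ 2 ν + (∫⁻ x, (ENNReal.ofReal (dist x₀ x)) ^ (2 * p) ∂ν) ^ (1 / 2 : ℝ))) := by
  lift p to ℝ≥0 using hp0.le
  lift L to ℝ≥0 using zero_le_one.trans hL
  have hp : p ≤ 1 := by exact_mod_cast hp1.trans (by norm_num)
  have hB : MeasurableSet 𝓑 := h𝓑.measurableSet
  have hψ : HolderOnWith L p ψ 𝓑ᶜ := .of_abs_sub_le hHolder
  obtain ⟨z, hz⟩ : 𝓑ᶜ.Nonempty := nonempty_of_measure_ne_zero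
    ((prob_compl_eq_zero_iff hB).not.2 (hμ𝓑.trans_lt (by norm_num)).ne)
  simp only [← edist_dist] at hμmom hνmom ⊢
  rw [ENNReal.ofReal_coe_nnreal, ← Real.enorm_eq_ofReal_abs, ← eLpNorm_edist_rpow_two,
    ← eLpNorm_edist_rpow_two, add_assoc]
  refine le_mul_Wp_add (by simpa using (zero_lt_one.trans_le hL).ne') ENNReal.coe_ne_top
    fun π hπ => hψ.enorm_integral_sub_le_of_mem_couplings hπ hB hμ𝓑 hν𝓑 hψmeas ?_ ?_
      (by exact_mod_cast hL) hp x₀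
  · exact hψ.integrableOn hψmeas.aestronglyMeasurable hp hz
      (lintegral_edist_rpow_ne_top_of_two_mul hμmom)
  · exact hψ.integrableOn hψmeas.aestronglyMeasurable hp hz
      (lintegral_edist_rpow_ne_top_of_two_mul hνmom)

/-- for probability measures `μ, ν` on a Polish space with finite moments
`Θ_{2p}`, an open set `𝓑` with `μ(𝓑), ν(𝓑) ≤ 1/4`, and a measurable `ψ : X → ℝ` which is
`p`-Hölder with constant `L ≥ 1` off `𝓑`:
`|∫ψdμ - ∫ψdν| ≤ L [W_p(μ,ν) + 4√(μ𝓑)(‖ψ‖_{L²(μ)} + Θ_{2p}(μ)^{1/2})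
                              + 4√(ν𝓑)(‖ψ‖_{L²(ν)} + Θ_{2p}(ν)^{1/2})]`
(the right-hand side computed in `ℝ≥0∞`, with `‖ψ‖_{L²}` as `eLpNorm`). -/
theorem integral_diff_le_holder_off_small_set
    {X : Type*} [MetricSpace X] [CompleteSpace X] [TopologicalSpace.SeparableSpace X]
    [MeasurableSpace X] [BorelSpace X]
    {p L : ℝ} (hp0 : 0 < p) (hp1 : p ≤ 1 / 2) (hL : 1 ≤ L) (x₀ : X)
    (μ ν : Measure X) [IsProbabilityMeasure μ] [IsProbabilityMeasure ν]
    (hμmom : ∫⁻ x, (ENNReal.ofReal (dist x₀ x)) ^ (2 * p) ∂μ ≠ ⊤)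
    (hνmom : ∫⁻ x, (ENNReal.ofReal (dist x₀ x)) ^ (2 * p) ∂ν ≠ ⊤)
    (𝓑 : Set X) (h𝓑 : IsOpen 𝓑) (hμ𝓑 : μ 𝓑 ≤ 1 / 4) (hν𝓑 : ν 𝓑 ≤ 1 / 4)
    (ψ : X → ℝ) (hψmeas : Measurable ψ)
    (hHolder : ∀ x ∉ 𝓑, ∀ y ∉ 𝓑, |ψ x - ψ y| ≤ L * dist x y ^ p) :
    ENNReal.ofReal |(∫ x, ψ x ∂μ) - ∫ x, ψ x ∂ν|
      ≤ ENNReal.ofReal L *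
        (Wp p μ ν
          + 4 * (μ 𝓑) ^ (1 / 2 : ℝ)
            * (eLpNorm ψ 2 μ + (∫⁻ x, (ENNReal.ofReal (dist x₀ x)) ^ (2 * p) ∂μ) ^ (1 / 2 : ℝ))
          + 4 * (ν 𝓑) ^ (1 / 2 : ℝ)
            * (eLpNorm ψ 2 ν + (∫⁻ x, (ENNReal.ofReal (dist x₀ x)) ^ (2 * p) ∂ν) ^ (1 / 2 : ℝ))) :=
  integral_diff_le_holder_off_small_set_general hp0 hp1 hL x₀ μ ν hμmom hνmom 𝓑 h𝓑 hμ𝓑 hν𝓑 ψ hψmeas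
    hHolder
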